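/- arXiv:2503.16859 — 5 statements merged into one kernel-verified Lean document; each statement's English description precedes it below -/
import Mathlib

section
/- Let F be a field of characteristic 2 that is complete with respect to a discrete valuation v : F^× → ℤ, and suppose that its residue field F̄ is perfect. Then there exists a unique field homomorphism β : F̄ → F such that β(F̄) ⊆ A_F and the residue of β(a) equals a for every a ∈ F̄ (i.e., β is a ring-theoretic section of the residue map A_F → F̄). -/
open Multiplicative Filter

/-- exponential notation for the value group -/
noncomputable def stmt0e (m : ℤ) : WithZero (Multiplicative ℤ) :=
  ((Multiplicative.ofAdd m : Multiplicative ℤ) : WithZero (Multiplicative ℤ))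

lemma stmt0e_lt (m m' : ℤ) (h : m < m') : stmt0e m < stmt0e m' := by
  unfold stmt0e
  rw [WithZero.coe_lt_coe]
  exact Multiplicative.ofAdd_lt.mpr h

lemma stmt0e_le (m m' : ℤ) (h : m ≤ m') : stmt0e m ≤ stmt0e m' := by
  unfold stmt0e
  rw [WithZero.coe_le_coe]
  exact Multiplicative.ofAdd_le.mpr h

lemma stmt0e_zero : stmt0e 0 = 1 := rfl

lemma stmt0e_pow (m : ℤ) (t : ℕ) : (stmt0e m) ^ t = stmt0e (t * m) := by
  unfold stmt0e
  rw [← WithZero.coe_pow, WithZero.coe_inj, ← ofAdd_nsmul]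
  norm_num

/-- A nonzero value `< 1` is at most `e(-1)`. -/
lemma stmt0_lt_one_le (g : WithZero (Multiplicative ℤ)) (h : g < 1) : g ≤ stmt0e (-1) := by
  rcases eq_or_ne g 0 with rfl | hg
  · exact zero_le'
  · obtain ⟨u, rfl⟩ := WithZero.ne_zero_iff_exists.mp hg
    rw [show (1 : WithZero (Multiplicative ℤ)) = stmt0e 0 from rfl] at h
    unfold stmt0e at *
    rw [WithZero.coe_lt_coe] at h
    rw [WithZero.coe_le_coe]
    have h0 : u.toAdd < (0:ℤ) := Multiplicative.toAdd_lt.mpr h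
    exact Multiplicative.toAdd_le.mp (show u.toAdd ≤ (-1:ℤ) by omega)



/-- Let `F` be a field of characteristic 2, complete with respect to a
discrete valuation (modeled by `Valued F ℤₘ₀` with surjective valuation and
`CompleteSpace F`), and let `k` be its residue field (presented as a field together
with a surjective ring homomorphism `ρ` from the valuation ring `A_F` whose kernel is
the maximal ideal `{x | v x < 1}`).  If `k` is perfect (every element is a square),
then there is a unique field homomorphism `β : k →+* F` landing in `A_F` which is a
section of the residue map `ρ`. -/
theorem stmt0 (F : Type*) [Field F] [CharP F 2]
    [Valued F (WithZero (Multiplicative ℤ))] [CompleteSpace F]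
    (hdisc : Function.Surjective (Valued.v : F → WithZero (Multiplicative ℤ)))
    (k : Type*) [Field k]
    (ρ : (Valued.v : Valuation F (WithZero (Multiplicative ℤ))).integer →+* k)
    (hρsurj : Function.Surjective ρ)
    (hρker : ∀ x, ρ x = 0 ↔ Valued.v (x : F) < 1)
    (hperf : ∀ a : k, ∃ b, b * b = a) :
    ∃! β : k →+* F,
      (∀ x, β x ∈ (Valued.v : Valuation F (WithZero (Multiplicative ℤ))).integer) ∧
      ∀ (x : k) (h : β x ∈ (Valued.v : Valuation F (WithZero (Multiplicative ℤ))).integer),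
        ρ ⟨β x, h⟩ = x := by
  classical
  have hprime : Fact (Nat.Prime 2) := ⟨Nat.prime_two⟩
  choose r hr using hperf
  choose L hL using hρsurj
  -- iterated square roots
  have hrIter : ∀ (n : ℕ) (a : k), (r^[n] a) ^ (2^n) = a := by
    intro n
    induction n with
    | zero => intro a; simp
    | succ n ih =>
      intro a
      rw [Function.iterate_succ_apply, pow_succ, pow_mul, ih (r a), sq, hr a]
  -- the approximating sequence
  set s : k → ℕ → F := fun a n => ((L (r^[n] a) : F)) ^ (2^n) with hs
  have hstep : ∀ a n, Valued.v (s a (n+1) - s a n) ≤ stmt0e (-(2^n : ℤ)) := by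
    intro a n
    set X : (Valued.v : Valuation F (WithZero (Multiplicative ℤ))).integer :=
      (L (r^[n+1] a))^2 - L (r^[n] a) with hX
    have hXres : ρ X = 0 := by
      rw [hX, map_sub, map_pow, hL, hL, Function.iterate_succ_apply', sq, hr, sub_self]
    have hXv' : Valued.v (X : F) ≤ stmt0e (-1) := stmt0_lt_one_le _ ((hρker X).mp hXres)
    have h1 : s a (n+1) = ((L (r^[n+1] a) : F)^2) ^ (2^n) := by
      simp only [hs]
      rw [pow_succ', pow_mul]
    have hdiff : s a (n+1) - s a n = ((X : F)) ^ (2^n) := by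
      have hXc : (X : F) = ((L (r^[n+1] a) : F))^2 - (L (r^[n] a) : F) := by
        rw [hX]; push_cast; ring
      rw [h1, hXc, sub_pow_char_pow]
    rw [hdiff, map_pow]
    calc (Valued.v (X:F)) ^ (2^n) ≤ (stmt0e (-1))^(2^n) := pow_le_pow_left' hXv' _
      _ = stmt0e (-(2^n : ℤ)) := by rw [stmt0e_pow]; congr 1; push_cast; ring
  have hbound : ∀ a N m, N ≤ m → Valued.v (s a m - s a N) ≤ stmt0e (-(2^N : ℤ)) := by
    intro a N m hNm
    induction m, hNm using Nat.le_induction with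
    | base => simp
    | succ m hm ih =>
      have heq : s a (m+1) - s a N = (s a (m+1) - s a m) + (s a m - s a N) := by ring
      rw [heq]
      apply Valuation.map_add_le
      · refine le_trans (hstep a m) (stmt0e_le _ _ ?_)
        have : (2:ℤ)^N ≤ 2^m := pow_le_pow_right₀ (by norm_num) hm
        omega
      · exact ih
  have hpair : ∀ a N m n, N ≤ m → N ≤ n →
      Valued.v (s a n - s a m) ≤ stmt0e (-(2^N:ℤ)) := by
    intro a N m n hm hn
    have heq : s a n - s a m = (s a n - s a N) - (s a m - s a N) := by ring
    rw [heq]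
    exact Valuation.map_sub_le _ (hbound a N n hn) (hbound a N m hm)
  have hcauchy : ∀ a, CauchySeq (s a) := by
    intro a
    rw [(Valued.hasBasis_uniformity F (WithZero (Multiplicative ℤ))).cauchySeq_iff]
    rintro γ -
    obtain ⟨u, hu⟩ := WithZero.ne_zero_iff_exists.mp
      (MonoidWithZeroHom.ValueGroup₀.embedding_unit_ne_zero γ)
    refine ⟨(-u.toAdd).toNat, fun m hm n hn => ?_⟩
    show (Valued.v : Valuation F (WithZero (Multiplicative ℤ))).restrict (s a n - s a m) < γ.1
    rw [Valuation.restrict_lt_iff_lt_embedding]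
    refine lt_of_le_of_lt (hpair a _ m n hm hn) ?_
    rw [← hu]
    have h2 : ((-u.toAdd).toNat : ℤ) < 2^((-u.toAdd).toNat) := by
      exact_mod_cast Nat.lt_two_pow_self
    have h3 : -u.toAdd ≤ ((-u.toAdd).toNat : ℤ) := Int.self_le_toNat _
    have h1 : -(2^((-u.toAdd).toNat) : ℤ) < u.toAdd := by omega
    calc stmt0e (-(2^((-u.toAdd).toNat) : ℤ)) < stmt0e u.toAdd := stmt0e_lt _ _ h1
      _ = ↑u := by simp [stmt0e]
  have hlim0 : ∀ a, ∃ x : F, Tendsto (s a) atTop (nhds x) := fun a =>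
    cauchySeq_tendsto_of_complete (hcauchy a)
  choose lim hlim using hlim0
  have hlimdist : ∀ a N, Valued.v (lim a - s a N) ≤ stmt0e (-(2^N:ℤ)) := by
    intro a N
    have hne : stmt0e (-(2^N:ℤ)) ≠ 0 := WithZero.coe_ne_zero
    obtain ⟨x0, hx0⟩ := hdisc (stmt0e (-(2^N:ℤ)))
    have hne' : (Valued.v : Valuation F (WithZero (Multiplicative ℤ))).restrict x0 ≠ 0 := by
      intro h; apply hne; rw [← hx0, ← Valuation.embedding_restrict, h, map_zero]
    set γ := Units.mk0 _ hne' with hγ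
    have hmem : {y : F | Valued.v (y - lim a) <
        stmt0e (-(2^N:ℤ))} ∈ nhds (lim a) := by
      rw [Valued.mem_nhds]
      refine ⟨γ, fun y hy => ?_⟩
      have := (Valuation.restrict_lt_iff_lt_embedding _).mp hy
      rw [hγ, Units.val_mk0, Valuation.embedding_restrict, hx0] at this
      exact this
    have hev : ∀ᶠ n in atTop, Valued.v (s a n - lim a) < stmt0e (-(2^N:ℤ)) :=
      (hlim a).eventually hmem
    obtain ⟨n, hn1, hn2⟩ := (hev.and (eventually_ge_atTop N)).exists
    have heq : lim a - s a N = -(s a n - lim a) + (s a n - s a N) := by ring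
    rw [heq]
    apply Valuation.map_add_le
    · rw [Valuation.map_neg]; exact le_of_lt hn1
    · exact hpair a N N n le_rfl hn2
  have hroot : ∀ a (m:ℕ), (lim (r^[m] a)) ^ (2^m) = lim a := by
    intro a m
    have h1 : Tendsto (fun n => (s (r^[m] a) n) ^ (2^m)) atTop
        (nhds ((lim (r^[m] a))^(2^m))) := (hlim _).pow _
    have h2 : (fun n => (s (r^[m] a) n) ^ (2^m)) = fun n => s a (n + m) := by
      funext n
      simp only [hs]
      rw [← Function.iterate_add_apply, ← pow_mul, ← pow_add]
    rw [h2] at h1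
    have h3 : Tendsto (fun n => s a (n + m)) atTop (nhds (lim a)) :=
      (hlim a).comp (tendsto_add_atTop_nat m)
    exact tendsto_nhds_unique h1 h3
  have hs0 : ∀ a, s a 0 = (L a : F) := by
    intro a; simp only [hs]; simp
  have he1lt : stmt0e (-(2^(0:ℕ):ℤ)) < 1 := by
    rw [show (1 : WithZero (Multiplicative ℤ)) = stmt0e 0 from rfl]
    exact stmt0e_lt _ _ (by norm_num)
  have hlimint : ∀ a, Valued.v (lim a) ≤ 1 := by
    intro a
    have h0 : lim a = (lim a - s a 0) + s a 0 := by ring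
    rw [h0]
    apply Valuation.map_add_le
    · exact le_trans (hlimdist a 0) (le_of_lt he1lt)
    · rw [hs0]; exact (L a).2
  have hres_eq : ∀ x y : (Valued.v : Valuation F (WithZero (Multiplicative ℤ))).integer,
      ρ x = ρ y ↔ Valued.v ((x:F) - (y:F)) < 1 := by
    intro x y
    rw [← sub_eq_zero, ← map_sub, hρker]
    simp
  have hlimres : ∀ a, ρ ⟨lim a, hlimint a⟩ = a := by
    intro a
    have h1 : ρ ⟨lim a, hlimint a⟩ = ρ (L a) := by
      rw [hres_eq]
      show Valued.v (lim a - (L a : F)) < 1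
      rw [← hs0]
      exact lt_of_le_of_lt (hlimdist a 0) he1lt
    rw [h1, hL]
  -- the key uniqueness property
  have huniq : ∀ (a : k) (x y : F),
      (∃ hx : Valued.v x ≤ 1, ρ ⟨x, hx⟩ = a) → (∀ n:ℕ, ∃ z:F, z^(2^n) = x) →
      (∃ hy : Valued.v y ≤ 1, ρ ⟨y, hy⟩ = a) → (∀ n:ℕ, ∃ z:F, z^(2^n) = y) → x = y := by
    rintro a x y ⟨hx, hxρ⟩ hxr ⟨hy, hyρ⟩ hyr
    by_contra hne
    have hsub : x - y ≠ 0 := sub_ne_zero.mpr hne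
    have hg0 : Valued.v (x - y) ≠ 0 := (Valuation.ne_zero_iff _).mpr hsub
    obtain ⟨u, hu⟩ := WithZero.ne_zero_iff_exists.mp hg0
    have hglt : Valued.v (x - y) < 1 := by
      have hz : ρ ((⟨x,hx⟩ : (Valued.v : Valuation F (WithZero (Multiplicative ℤ))).integer)
          - ⟨y,hy⟩) = 0 := by rw [map_sub, hxρ, hyρ, sub_self]
      have := (hρker _).mp hz
      simpa using this
    have hu0 : u.toAdd < 0 := by
      have h4 : u < 1 := WithZero.coe_lt_one.mp (by rw [hu]; exact hglt)
      simpa using Multiplicative.toAdd_lt.mpr h4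
    set n : ℕ := (-u.toAdd).toNat with hn
    obtain ⟨p, hp⟩ := hxr n
    obtain ⟨q, hq⟩ := hyr n
    have hpq : x - y = (p - q)^(2^n) := by rw [sub_pow_char_pow, hp, hq]
    have hpqne : p - q ≠ 0 := by
      intro h
      rw [h, zero_pow (by positivity)] at hpq
      exact hsub hpq
    obtain ⟨w, hw⟩ := WithZero.ne_zero_iff_exists.mp (((Valued.v : Valuation F (WithZero (Multiplicative ℤ))).ne_zero_iff).mpr hpqne)
    have hcoe : (u : WithZero (Multiplicative ℤ)) = ↑(w ^ (2^n)) := by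
      rw [hu, hpq, map_pow, ← hw, WithZero.coe_pow]
    have hupow : u = w ^ (2^n) := WithZero.coe_inj.mp hcoe
    have hprod : u.toAdd = ((2^n : ℕ) : ℤ) * w.toAdd := by
      rw [hupow, toAdd_pow, nsmul_eq_mul]
    have hp2 : (0:ℤ) < ((2^n : ℕ) : ℤ) := by positivity
    have hwneg : w.toAdd < 0 := by
      by_contra hcon
      push_neg at hcon
      have hnn : (0:ℤ) ≤ ((2^n : ℕ) : ℤ) * w.toAdd := mul_nonneg (le_of_lt hp2) hcon
      linarith
    have hw1 : w.toAdd ≤ -1 := by omega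
    have hle : u.toAdd ≤ -((2^n : ℕ) : ℤ) := by
      have := mul_le_mul_of_nonneg_left hw1 (le_of_lt hp2)
      rw [hprod]; linarith
    have hfin : (n:ℤ) < ((2^n : ℕ) : ℤ) := by exact_mod_cast (Nat.lt_two_pow_self (n := n))
    have hcast : (n:ℤ) = -u.toAdd := by
      rw [hn]; exact Int.toNat_of_nonneg (by omega)
    omega
  have hP1 : ∀ a, ∃ h : Valued.v (lim a) ≤ 1, ρ ⟨lim a, h⟩ = a :=
    fun a => ⟨hlimint a, hlimres a⟩
  have hP2 : ∀ a (n : ℕ), ∃ z : F, z^(2^n) = lim a :=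
    fun a n => ⟨lim (r^[n] a), hroot a n⟩
  refine ⟨{ toFun := lim
            map_one' := ?_
            map_mul' := ?_
            map_zero' := ?_
            map_add' := ?_ }, ⟨?_, ?_⟩, ?_⟩
  · -- lim 1 = 1
    refine huniq 1 _ _ (hP1 1) (hP2 1) ⟨by simp, ?_⟩ (fun n => ⟨1, one_pow _⟩)
    exact map_one ρ
  · -- lim (a*b) = lim a * lim b
    intro a b
    have hm : Valued.v (lim a * lim b) ≤ 1 := by
      rw [map_mul]; exact mul_le_one' (hlimint a) (hlimint b)
    refine huniq (a*b) _ _ (hP1 _) (hP2 _) ⟨hm, ?_⟩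
      (fun n => ⟨lim (r^[n] a) * lim (r^[n] b), by rw [mul_pow, hroot, hroot]⟩)
    show ρ (⟨lim a, hlimint a⟩ * ⟨lim b, hlimint b⟩) = a * b
    rw [map_mul, hlimres, hlimres]
  · -- lim 0 = 0
    refine huniq 0 _ _ (hP1 0) (hP2 0) ⟨by simp, ?_⟩
      (fun n => ⟨0, by rw [zero_pow (by positivity)]⟩)
    exact map_zero ρ
  · -- lim (a+b) = lim a + lim b
    intro a b
    have hm : Valued.v (lim a + lim b) ≤ 1 :=
      Valuation.map_add_le _ (hlimint a) (hlimint b)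
    refine huniq (a+b) _ _ (hP1 _) (hP2 _) ⟨hm, ?_⟩
      (fun n => ⟨lim (r^[n] a) + lim (r^[n] b), by rw [add_pow_char_pow, hroot, hroot]⟩)
    show ρ (⟨lim a, hlimint a⟩ + ⟨lim b, hlimint b⟩) = a + b
    rw [map_add, hlimres, hlimres]
  · exact fun x => hlimint x
  · exact fun x h => hlimres x
  · rintro β' ⟨hβ'int, hβ'sec⟩
    ext a
    show β' a = lim a
    refine huniq a _ _ ⟨hβ'int a, hβ'sec a (hβ'int a)⟩ ?_ (hP1 a) (hP2 a)
    intro m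
    exact ⟨β' (r^[m] a), by rw [← map_pow, hrIter]⟩
end

section
/- Let F be a field of characteristic 2 that is complete with respect to a discrete valuation v : F^× → ℤ, whose residue field F̄ is imperfect. Let S be a 2-basis of F̄ and let S' ⊆ A_F be a set consisting of exactly one representative of each element of S, i.e., a set of lifts s ↦ s' ∈ A_F with residue of s' equal to s, chosen bijectively. Then there exists a unique field monomorphism α : F̄ → F such that α(F̄) ⊆ A_F, α(s) = s' for every s ∈ S, and the residue of α(a) equals a for all a ∈ F̄. -/
/-- A family `t : ι → k` is a 2-basis of the field `k` of characteristic 2 if every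
element of `k` is uniquely a finite sum `Σ_I t^I f_I²` over finitely supported
`I ∈ {0,1}^ι` (encoded as `Finset ι`). -/
def IsTwoBasisFam {k ι : Type*} [Field k] (t : ι → k) : Prop :=
  ∀ f : k, ∃! c : Finset ι →₀ k, f = c.sum fun I a => (∏ i ∈ I, t i) * a ^ 2

/-- A subset `S ⊆ k` is a 2-basis of `k` if the inclusion family is a 2-basis. -/
def IsTwoBasisSet {k : Type*} [Field k] (S : Set k) : Prop :=
  IsTwoBasisFam fun s : S => (s : k)

open Finset
open scoped symmDiff
set_option linter.unusedSectionVars false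

namespace Stmt4Aux

noncomputable section

local notation "Γ" => WithZero (Multiplicative ℤ)

def dd : Γ := (Multiplicative.ofAdd (-1 : ℤ) : Multiplicative ℤ)

lemma dd_pow (k : ℕ) : dd ^ k = ((Multiplicative.ofAdd (-(k:ℤ)) : Multiplicative ℤ) : Γ) := by
  rw [dd, ← WithZero.coe_pow, ← ofAdd_nsmul]
  norm_num

lemma coe_le_coe_iff {a b : ℤ} :
    ((Multiplicative.ofAdd a : Multiplicative ℤ) : Γ) ≤ (Multiplicative.ofAdd b : Multiplicative ℤ) ↔ a ≤ b := by
  rw [WithZero.coe_le_coe, Multiplicative.ofAdd_le]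

lemma coe_lt_coe_iff {a b : ℤ} :
    ((Multiplicative.ofAdd a : Multiplicative ℤ) : Γ) < (Multiplicative.ofAdd b : Multiplicative ℤ) ↔ a < b := by
  rw [WithZero.coe_lt_coe, Multiplicative.ofAdd_lt]

lemma dd_ne_zero : dd ≠ 0 := WithZero.coe_ne_zero

lemma lt_one_iff_le_dd {γ : Γ} : γ < 1 ↔ γ ≤ dd := by
  induction γ using WithZero.recZeroCoe with
  | zero =>
      simp only [zero_le', iff_true]
      exact zero_lt_one
  | coe a =>
      rw [dd, ← WithZero.coe_one, WithZero.coe_lt_coe, WithZero.coe_le_coe]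
      constructor
      · intro h
        have : Multiplicative.toAdd a < 0 := h
        have h2 : Multiplicative.toAdd a ≤ -1 := by omega
        exact h2
      · intro h
        have : Multiplicative.toAdd a ≤ -1 := h
        show Multiplicative.toAdd a < 0
        omega

lemma dd_pow_le_dd_pow {m n : ℕ} (h : n ≤ m) : dd ^ m ≤ dd ^ n := by
  rw [dd_pow, dd_pow, coe_le_coe_iff]; omega

lemma dd_pow_le_dd (n : ℕ) : dd ^ (2 ^ n) ≤ dd := by
  have : dd ^ (2:ℕ)^n ≤ dd ^ 1 := dd_pow_le_dd_pow (Nat.one_le_two_pow)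
  simpa using this

lemma dd_pow_sq (n : ℕ) : (dd ^ 2 ^ n) ^ 2 = dd ^ 2 ^ (n + 1) := by
  rw [← pow_mul, pow_succ]

lemma exists_dd_pow_lt {γ : Γ} (h : γ ≠ 0) : ∃ n : ℕ, dd ^ 2 ^ n < γ := by
  obtain ⟨a, rfl⟩ := WithZero.ne_zero_iff_exists.mp h
  set k := (-(Multiplicative.toAdd a)).toNat with hk
  refine ⟨k, ?_⟩
  have h2 : (k : ℤ) < 2 ^ k := by exact_mod_cast Nat.lt_two_pow_self (n := k)
  rw [dd_pow, show a = Multiplicative.ofAdd (Multiplicative.toAdd a) from (ofAdd_toAdd a).symm,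
    coe_lt_coe_iff]
  push_cast
  have h3 : -(Multiplicative.toAdd a) ≤ (k:ℤ) := Int.self_le_toNat _
  linarith


section Main

variable {F : Type*} [Field F] [CharP F 2] [Valued F Γ]
variable {kF : Type*} [Field kF] [CharP kF 2] {S : Set kF} [DecidableEq kF]

lemma prod_symmDiff_sq {M : Type*} [CommMonoid M] {ι : Type*} [DecidableEq ι]
    (A B : Finset ι) (f : ι → M) :
    (∏ i ∈ A ∆ B, f i) * (∏ i ∈ A ∩ B, f i) ^ 2 = (∏ i ∈ A, f i) * (∏ i ∈ B, f i) := by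
  have h1 : A ∆ B = (A ∪ B) \ (A ∩ B) := by
    rw [symmDiff_eq_sup_sdiff_inf]; rfl
  have h2 : A ∩ B ⊆ A ∪ B := subset_trans Finset.inter_subset_left Finset.subset_union_left
  rw [h1, sq, ← mul_assoc, Finset.prod_sdiff h2, Finset.prod_union_inter]

/-- the monomial-times-square map -/
def g (S : Set kF) : Finset S → kF → kF := fun I x => (∏ i ∈ I, (i : kF)) * x ^ 2

lemma g_zero (I : Finset S) : g S I 0 = 0 := by simp [g]

lemma g_add (I : Finset S) (x y : kF) : g S I (x + y) = g S I x + g S I y := by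
  simp only [g, CharTwo.add_sq, mul_add]

variable (hS : IsTwoBasisSet S)

def dec (a : kF) : Finset S →₀ kF := (hS a).choose

lemma dec_spec (a : kF) : a = (dec hS a).sum (g S) := (hS a).choose_spec.1

lemma dec_unique {a : kF} {c : Finset S →₀ kF} (h : a = c.sum (g S)) : c = dec hS a :=
  (hS a).choose_spec.2 c h

lemma dec_zero : dec hS 0 = 0 :=
  (dec_unique hS (by simp [Finsupp.sum_zero_index])).symm

lemma dec_add (a b : kF) : dec hS (a + b) = dec hS a + dec hS b := by
  refine (dec_unique hS ?_).symm
  rw [Finsupp.sum_add_index (fun I _ => g_zero I) (fun I _ x y => g_add I x y)]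
  exact congrArg₂ (· + ·) (dec_spec hS a) (dec_spec hS b)

lemma dec_g (M : Finset S) (x : kF) : dec hS (g S M x) = Finsupp.single M x :=
  (dec_unique hS (by rw [Finsupp.sum_single_index (g_zero M)])).symm

section Val

abbrev Oint (F : Type*) [Field F] [Valued F Γ] : Subring F :=
  ((Valued.v : Valuation F Γ).integer : Subring F)

variable (lift : S → Oint F) (l0 : kF → Oint F)
variable (ρF : Oint F →+* kF)

/-- product of the chosen lifts over a finite monomial -/
def P (lift : S → Oint F) : Finset S → Oint F := fun I => ∏ i ∈ I, lift i

lemma v_le_one (x : Oint F) : Valued.v (x : F) ≤ 1 := x.2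

lemma v_sub_le_dd (hρFker : ∀ x : Oint F, ρF x = 0 ↔ Valued.v (x : F) < 1)
    {x y : Oint F} (h : ρF x = ρF y) : Valued.v ((x : F) - (y : F)) ≤ dd := by
  have : ρF (x - y) = 0 := by rw [map_sub, h, sub_self]
  rw [hρFker] at this
  rw [← lt_one_iff_le_dd]
  simpa using this

/-- helper estimate: `v (∑ uᵢ wᵢ²) ≤ γ²` when `v uᵢ ≤ 1`, `v wᵢ ≤ γ`. -/
lemma v_sq_sum_le {ι : Type*} (s : Finset ι) (u w : ι → F) {γ : Γ}
    (hu : ∀ i ∈ s, Valued.v (u i) ≤ 1) (hw : ∀ i ∈ s, Valued.v (w i) ≤ γ) :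
    Valued.v (∑ i ∈ s, u i * (w i) ^ 2) ≤ γ ^ 2 := by
  refine Valuation.map_sum_le _ fun i hi => ?_
  rw [map_mul, map_pow]
  calc Valued.v (u i) * Valued.v (w i) ^ 2 ≤ 1 * γ ^ 2 :=
        mul_le_mul' (hu i hi) (pow_le_pow_left' (hw i hi) 2)
    _ = γ ^ 2 := one_mul _

/-- The iterated lifting sequence. -/
def LL (hS : IsTwoBasisSet S) (lift : S → Oint F) (l0 : kF → Oint F) : ℕ → kF → Oint F
  | 0 => l0
  | n + 1 => fun a => (dec hS a).sum fun I x => P lift I * (LL hS lift l0 n x) ^ 2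

variable (hρFsec : ∀ a, ρF (l0 a) = a) (hlift : ∀ s : S, ρF (lift s) = (s : kF))
variable (hρFker : ∀ x : Oint F, ρF x = 0 ↔ Valued.v (x : F) < 1)

include hlift in
lemma ρ_P (I : Finset S) : ρF (P lift I) = ∏ i ∈ I, (i : kF) := by
  rw [P, map_prod]
  exact Finset.prod_congr rfl fun i _ => hlift i

include hρFsec hlift in

lemma LL_section : ∀ n a, ρF (LL hS lift l0 n a) = a := by
  intro n
  induction n with
  | zero => exact hρFsec
  | succ n ih =>
      intro a
      show ρF ((dec hS a).sum fun I x => P lift I * (LL hS lift l0 n x) ^ 2) = a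
      rw [map_finsuppSum]
      rw [show ((dec hS a).sum fun I x => ρF (P lift I * (LL hS lift l0 n x) ^ 2))
          = (dec hS a).sum (g S) from ?_]
      · exact (dec_spec hS a).symm
      · refine Finsupp.sum_congr fun I _ => ?_
        rw [map_mul, map_pow, ρ_P lift ρF hlift, ih]
        rfl


lemma sq_sub (x y : F) : (x - y) ^ 2 = x ^ 2 - y ^ 2 := by
  rw [CharTwo.sub_eq_add, CharTwo.sub_eq_add, CharTwo.add_sq]

lemma v_tri {x y z : F} {γ : Γ} (h1 : Valued.v (x - y) ≤ γ) (h2 : Valued.v (y - z) ≤ γ) :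
    Valued.v (x - z) ≤ γ := by
  have h : x - z = (x - y) + (y - z) := by ring
  rw [h]; exact Valuation.map_add_le _ h1 h2

lemma dd_lt_one : dd < 1 := lt_one_iff_le_dd.mpr le_rfl

lemma LL_succ_coe (n : ℕ) (a : kF) :
    ((LL hS lift l0 (n + 1) a : Oint F) : F)
      = ∑ I ∈ (dec hS a).support, (P lift I : F) * ((LL hS lift l0 n (dec hS a I) : Oint F) : F) ^ 2 := by
  show (((dec hS a).sum fun I x => P lift I * (LL hS lift l0 n x) ^ 2 : Oint F) : F) = _
  rw [Finsupp.sum]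
  push_cast
  rfl

include hρFsec hlift hρFker in
lemma LL_cauchy : ∀ n (a : kF),
    Valued.v ((LL hS lift l0 (n + 1) a : F) - (LL hS lift l0 n a : F)) ≤ dd ^ 2 ^ n := by
  intro n
  induction n with
  | zero =>
      intro a
      have h := v_sub_le_dd ρF hρFker
        (x := LL hS lift l0 1 a) (y := LL hS lift l0 0 a)
        (by rw [LL_section hS lift l0 ρF hρFsec hlift, LL_section hS lift l0 ρF hρFsec hlift])
      simpa using h
  | succ n ih =>
      intro a
      rw [LL_succ_coe, LL_succ_coe, ← Finset.sum_sub_distrib]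
      have he : ∀ I ∈ (dec hS a).support,
          (P lift I : F) * ((LL hS lift l0 (n+1) (dec hS a I) : Oint F) : F) ^ 2
            - (P lift I : F) * ((LL hS lift l0 n (dec hS a I) : Oint F) : F) ^ 2
          = (P lift I : F) *
            (((LL hS lift l0 (n+1) (dec hS a I) : Oint F) : F)
              - ((LL hS lift l0 n (dec hS a I) : Oint F) : F)) ^ 2 := by
        intro I _
        rw [sq_sub, mul_sub]
      rw [Finset.sum_congr rfl he, ← dd_pow_sq n]
      exact v_sq_sum_le _ _ _ (fun I _ => v_le_one _) (fun I _ => ih _)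

include hρFsec hlift hρFker in
lemma LL_dist (n : ℕ) : ∀ m, n ≤ m → ∀ a : kF,
    Valued.v ((LL hS lift l0 m a : F) - (LL hS lift l0 n a : F)) ≤ dd ^ 2 ^ n := by
  intro m hm
  induction m, hm using Nat.le_induction with
  | base => intro a; simp
  | succ m hm ih =>
      intro a
      refine v_tri ?_ (ih a)
      refine le_trans (LL_cauchy hS lift l0 ρF hρFsec hlift hρFker m a) ?_
      exact dd_pow_le_dd_pow (Nat.pow_le_pow_right (by norm_num) hm)

variable [CompleteSpace F]

include hρFsec hlift hρFker in
lemma LL_cauchySeq (a : kF) : CauchySeq (fun n => (LL hS lift l0 n a : F)) := by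
  rw [(Valued.hasBasis_uniformity F Γ).cauchySeq_iff]
  intro γ _
  have hγ0 : MonoidWithZeroHom.ValueGroup₀.embedding γ.1 ≠ (0 : Γ) := fun h0 =>
    γ.ne_zero (MonoidWithZeroHom.ValueGroup₀.embedding_injective (h0.trans (map_zero _).symm))
  obtain ⟨N, hN⟩ := exists_dd_pow_lt hγ0
  refine ⟨N, fun k hk m hm => ?_⟩
  show Valued.v.restrict ((LL hS lift l0 m a : F) - (LL hS lift l0 k a : F)) < γ.1
  rw [Valuation.restrict_lt_iff_lt_embedding]
  refine lt_of_le_of_lt (v_tri (y := (LL hS lift l0 N a : F)) ?_ ?_) hN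
  · exact LL_dist hS lift l0 ρF hρFsec hlift hρFker N m hm a
  · rw [Valuation.map_sub_swap]
    exact LL_dist hS lift l0 ρF hρFsec hlift hρFker N k hk a

def alph (a : kF) : F :=
  @dite F (∃ x : F, Filter.Tendsto (fun n => (LL hS lift l0 n a : F)) Filter.atTop (nhds x))
    (Classical.dec _) (fun h => h.choose) fun _ => 0

include hρFsec hlift hρFker in
lemma alph_tendsto (a : kF) :
    Filter.Tendsto (fun n => (LL hS lift l0 n a : F)) Filter.atTop (nhds (alph hS lift l0 a)) := by
  have h : ∃ x : F, Filter.Tendsto (fun n => (LL hS lift l0 n a : F)) Filter.atTop (nhds x) :=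
    cauchySeq_tendsto_of_complete (LL_cauchySeq hS lift l0 ρF hρFsec hlift hρFker a)
  unfold alph
  rw [dif_pos h]
  exact h.choose_spec

include hρFsec hlift hρFker in
lemma alph_approx (n : ℕ) (a : kF) :
    Valued.v (alph hS lift l0 a - (LL hS lift l0 n a : F)) ≤ dd ^ 2 ^ n := by
  have h := alph_tendsto hS lift l0 ρF hρFsec hlift hρFker a
  by_contra hlt
  rw [not_le] at hlt
  have hne : Valued.v (alph hS lift l0 a - (LL hS lift l0 n a : F)) ≠ 0 :=
    ne_of_gt (lt_of_le_of_lt (by simp) hlt)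
  have hc : Valued.v.restrict (alph hS lift l0 a - (LL hS lift l0 n a : F)) ≠ 0 := by
    rw [Ne, Valuation.restrict_eq_zero_iff]; exact hne
  have hs : {y : F | Valued.v.restrict (y - alph hS lift l0 a)
      < ((Units.mk0 _ hc : (MonoidWithZeroHom.ValueGroup₀ (.ofClass (Valued.v : Valuation F Γ)))ˣ) :
        MonoidWithZeroHom.ValueGroup₀ (.ofClass (Valued.v : Valuation F Γ)))} ∈
      nhds (alph hS lift l0 a) := Valued.mem_nhds.mpr ⟨Units.mk0 _ hc, subset_rfl⟩
  obtain ⟨N, hN⟩ := Filter.eventually_atTop.mp (h.eventually hs)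
  have h1 : Valued.v ((LL hS lift l0 (max n N) a : F) - alph hS lift l0 a)
      < Valued.v (alph hS lift l0 a - (LL hS lift l0 n a : F)) := by
    have := hN _ (le_max_right n N)
    simpa only [Set.mem_setOf_eq, Units.val_mk0, Valuation.restrict_lt_iff] using this
  have h2 := LL_dist hS lift l0 ρF hρFsec hlift hρFker n (max n N) (le_max_left n N) a
  have h3 : alph hS lift l0 a - (LL hS lift l0 n a : F)
      = (alph hS lift l0 a - (LL hS lift l0 (max n N) a : F))
        + ((LL hS lift l0 (max n N) a : F) - (LL hS lift l0 n a : F)) := by ring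
  have h1' : Valued.v (alph hS lift l0 a - (LL hS lift l0 (max n N) a : F))
      < Valued.v (alph hS lift l0 a - (LL hS lift l0 n a : F)) := by
    rw [Valuation.map_sub_swap]; exact h1
  have h4 := Valuation.map_add_lt Valued.v h1' (lt_of_le_of_lt h2 hlt)
  rw [← h3] at h4
  exact lt_irrefl _ h4

include hρFsec hlift hρFker in
lemma alph_mem (a : kF) : alph hS lift l0 a ∈ Oint F := by
  have h : alph hS lift l0 a = (alph hS lift l0 a - (LL hS lift l0 0 a : F)) + (LL hS lift l0 0 a : F) := by
    ring
  rw [Valuation.mem_integer_iff, h]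
  refine Valuation.map_add_le _ ?_ (v_le_one _)
  refine le_trans (le_trans (alph_approx hS lift l0 ρF hρFsec hlift hρFker 0 a) ?_) (le_of_lt dd_lt_one)
  simp

def AA (a : kF) : Oint F :=
  ⟨alph hS lift l0 a, alph_mem hS lift l0 ρF hρFsec hlift hρFker a⟩

include hρFker in
lemma ρ_eq {x y : Oint F} (h : Valued.v ((x : F) - (y : F)) < 1) : ρF x = ρF y := by
  have h2 : ρF (x - y) = 0 := (hρFker _).mpr (by simpa using h)
  rw [map_sub, sub_eq_zero] at h2
  exact h2

lemma alph_section (a : kF) : ρF (AA hS lift l0 ρF hρFsec hlift hρFker a) = a := by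
  have h : ρF (AA hS lift l0 ρF hρFsec hlift hρFker a) = ρF (l0 a) := by
    refine ρ_eq ρF hρFker ?_
    show Valued.v (alph hS lift l0 a - (LL hS lift l0 0 a : F)) < 1
    exact lt_of_le_of_lt (le_trans (alph_approx hS lift l0 ρF hρFsec hlift hρFker 0 a) (by simp)) dd_lt_one
  rw [h, hρFsec]

lemma v_forall_zero {z : F} (h : ∀ n : ℕ, Valued.v z ≤ dd ^ 2 ^ n) : z = 0 := by
  by_contra hz
  have hv : Valued.v z ≠ 0 := (Valuation.ne_zero_iff _).mpr hz
  obtain ⟨n, hn⟩ := exists_dd_pow_lt hv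
  exact absurd (h n) (not_le.mpr hn)

include hρFsec hlift hρFker in
lemma alph_rec (a : kF) :
    alph hS lift l0 a
      = (dec hS a).sum fun I x => (P lift I : F) * (alph hS lift l0 x) ^ 2 := by
  rw [← sub_eq_zero]
  refine v_forall_zero fun n => ?_
  refine le_trans ?_ (dd_pow_le_dd_pow (Nat.pow_le_pow_right (by norm_num) (Nat.le_succ n)))
  have h : alph hS lift l0 a - (dec hS a).sum (fun I x => (P lift I : F) * (alph hS lift l0 x) ^ 2)
      = (alph hS lift l0 a - (LL hS lift l0 (n+1) a : F))
        + ((LL hS lift l0 (n+1) a : F)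
            - (dec hS a).sum fun I x => (P lift I : F) * (alph hS lift l0 x) ^ 2) := by
    ring
  rw [h]
  refine Valuation.map_add_le _ (alph_approx hS lift l0 ρF hρFsec hlift hρFker (n+1) a) ?_
  rw [LL_succ_coe, Finsupp.sum, ← Finset.sum_sub_distrib]
  have he : ∀ I ∈ (dec hS a).support,
      (P lift I : F) * ((LL hS lift l0 n (dec hS a I) : Oint F) : F) ^ 2
        - (P lift I : F) * (alph hS lift l0 (dec hS a I)) ^ 2
      = (P lift I : F) *
        (((LL hS lift l0 n (dec hS a I) : Oint F) : F) - alph hS lift l0 (dec hS a I)) ^ 2 := by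
    intro I _
    rw [sq_sub, mul_sub]
  rw [Finset.sum_congr rfl he, ← dd_pow_sq n]
  refine v_sq_sum_le _ _ _ (fun I _ => v_le_one _) fun I _ => ?_
  rw [Valuation.map_sub_swap]
  exact alph_approx hS lift l0 ρF hρFsec hlift hρFker n _


include hρFsec hlift hρFker in
lemma alph_zero : alph hS lift l0 (0 : kF) = 0 := by
  rw [alph_rec hS lift l0 ρF hρFsec hlift hρFker 0, dec_zero hS, Finsupp.sum_zero_index]

include hρFsec hlift hρFker in
lemma alph_g (M : Finset S) (x : kF) :
    alph hS lift l0 (g S M x) = (P lift M : F) * (alph hS lift l0 x) ^ 2 := by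
  rw [alph_rec hS lift l0 ρF hρFsec hlift hρFker, dec_g hS M x,
    Finsupp.sum_single_index (by rw [alph_zero hS lift l0 ρF hρFsec hlift hρFker]; ring)]

include hρFsec hlift hρFker in
lemma alph_add_aux : ∀ n : ℕ, ∀ a b : kF,
    Valued.v (alph hS lift l0 (a + b) - alph hS lift l0 a - alph hS lift l0 b) ≤ dd ^ 2 ^ n := by
  intro n
  induction n with
  | zero =>
      intro a b
      have h := v_sub_le_dd ρF hρFker
        (x := AA hS lift l0 ρF hρFsec hlift hρFker (a + b))
        (y := AA hS lift l0 ρF hρFsec hlift hρFker a + AA hS lift l0 ρF hρFsec hlift hρFker b)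
        (by rw [map_add, alph_section, alph_section, alph_section])
      simp only [pow_zero, pow_one]
      refine le_trans (le_of_eq ?_) h
      show _ = Valued.v (alph hS lift l0 (a+b) - (alph hS lift l0 a + alph hS lift l0 b))
      rw [sub_add_eq_sub_sub]
  | succ n ih =>
      intro a b
      set T := (dec hS a).support ∪ (dec hS b).support with hT
      have hz : ∀ I ∈ T, (P lift I : F) * (alph hS lift l0 (0:kF)) ^ 2 = 0 := by
        intro I _
        rw [alph_zero hS lift l0 ρF hρFsec hlift hρFker]; ring
      have ha : alph hS lift l0 a = ∑ I ∈ T, (P lift I : F) * (alph hS lift l0 ((dec hS a) I)) ^ 2 := by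
        rw [alph_rec hS lift l0 ρF hρFsec hlift hρFker]
        exact Finsupp.sum_of_support_subset _ Finset.subset_union_left _ hz
      have hb : alph hS lift l0 b = ∑ I ∈ T, (P lift I : F) * (alph hS lift l0 ((dec hS b) I)) ^ 2 := by
        rw [alph_rec hS lift l0 ρF hρFsec hlift hρFker]
        exact Finsupp.sum_of_support_subset _ Finset.subset_union_right _ hz
      have hab : alph hS lift l0 (a + b)
          = ∑ I ∈ T, (P lift I : F) * (alph hS lift l0 ((dec hS a) I + (dec hS b) I)) ^ 2 := by
        rw [alph_rec hS lift l0 ρF hρFsec hlift hρFker, dec_add hS a b]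
        refine (Finsupp.sum_of_support_subset _ (subset_trans Finsupp.support_add (by rw [hT])) _ hz).trans ?_
        exact Finset.sum_congr rfl fun I _ => by rw [Finsupp.add_apply]
      rw [hab, ha, hb, ← Finset.sum_sub_distrib, ← Finset.sum_sub_distrib]
      have he : ∀ I ∈ T,
          (P lift I : F) * (alph hS lift l0 ((dec hS a) I + (dec hS b) I)) ^ 2
            - (P lift I : F) * (alph hS lift l0 ((dec hS a) I)) ^ 2
            - (P lift I : F) * (alph hS lift l0 ((dec hS b) I)) ^ 2
          = (P lift I : F) * ((alph hS lift l0 ((dec hS a) I + (dec hS b) I))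
              - alph hS lift l0 ((dec hS a) I) - alph hS lift l0 ((dec hS b) I)) ^ 2 := by
        intro I _
        rw [sq_sub, sq_sub, mul_sub, mul_sub]
      rw [Finset.sum_congr rfl he, ← dd_pow_sq n]
      exact v_sq_sum_le _ _ _ (fun I _ => v_le_one _) fun I _ => ih _ _

include hρFsec hlift hρFker in
lemma alph_add (a b : kF) :
    alph hS lift l0 (a + b) = alph hS lift l0 a + alph hS lift l0 b := by
  have h := v_forall_zero (alph_add_aux hS lift l0 ρF hρFsec hlift hρFker · a b)
  rw [sub_sub, sub_eq_zero] at h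
  exact h

include hρFsec hlift hρFker in
lemma alph_sum {ι : Type*} (s : Finset ι) (f : ι → kF) :
    alph hS lift l0 (∑ i ∈ s, f i) = ∑ i ∈ s, alph hS lift l0 (f i) := by
  induction s using Finset.cons_induction with
  | empty => simpa using alph_zero hS lift l0 ρF hρFsec hlift hρFker
  | cons i s hi ih =>
      rw [Finset.sum_cons, Finset.sum_cons,
        alph_add hS lift l0 ρF hρFsec hlift hρFker, ih]


lemma P_coe (I : Finset S) : (P lift I : F) = ∏ i ∈ I, ((lift i : Oint F) : F) := by
  rw [P]; push_cast; rfl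

lemma P_mul (A B : Finset S) :
    (P lift A : F) * (P lift B : F) = (P lift (A ∆ B) : F) * ((P lift (A ∩ B) : F)) ^ 2 := by
  rw [P_coe, P_coe, P_coe, P_coe, prod_symmDiff_sq]

lemma SP_g (M I : Finset S) (y : kF) :
    (∏ i ∈ M, (i : kF)) * g S I y = g S (M ∆ I) ((∏ i ∈ M ∩ I, (i : kF)) * y) := by
  have h := prod_symmDiff_sq M I (fun i : S => (i : kF))
  calc (∏ i ∈ M, (i : kF)) * g S I y = ((∏ i ∈ M, (i : kF)) * ∏ i ∈ I, (i : kF)) * y ^ 2 := by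
        rw [g]; ring
    _ = ((∏ i ∈ M ∆ I, (i : kF)) * (∏ i ∈ M ∩ I, (i : kF)) ^ 2) * y ^ 2 := by rw [h]
    _ = g S (M ∆ I) ((∏ i ∈ M ∩ I, (i : kF)) * y) := by rw [g]; ring

include hρFsec hlift hρFker in
lemma alph_mono_aux : ∀ n : ℕ, ∀ (M : Finset S) (x : kF),
    Valued.v (alph hS lift l0 ((∏ i ∈ M, (i : kF)) * x) - (P lift M : F) * alph hS lift l0 x)
      ≤ dd ^ 2 ^ n := by
  intro n
  induction n with
  | zero =>
      intro M x
      have h := v_sub_le_dd ρF hρFker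
        (x := AA hS lift l0 ρF hρFsec hlift hρFker ((∏ i ∈ M, (i : kF)) * x))
        (y := P lift M * AA hS lift l0 ρF hρFsec hlift hρFker x)
        (by rw [map_mul, alph_section, ρ_P lift ρF hlift, alph_section])
      simpa [AA] using h
  | succ n ih =>
      intro M x
      have hx : alph hS lift l0 ((∏ i ∈ M, (i : kF)) * x)
          = ∑ I ∈ (dec hS x).support,
              (P lift (M ∆ I) : F)
                * (alph hS lift l0 ((∏ i ∈ M ∩ I, (i : kF)) * (dec hS x I))) ^ 2 := by
        conv_lhs => rw [dec_spec hS x, Finsupp.mul_sum]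
        rw [Finsupp.sum]
        rw [alph_sum hS lift l0 ρF hρFsec hlift hρFker]
        refine Finset.sum_congr rfl fun I _ => ?_
        rw [SP_g, alph_g hS lift l0 ρF hρFsec hlift hρFker]
      have hy : (P lift M : F) * alph hS lift l0 x
          = ∑ I ∈ (dec hS x).support,
              (P lift (M ∆ I) : F)
                * ((P lift (M ∩ I) : F) * alph hS lift l0 (dec hS x I)) ^ 2 := by
        conv_lhs => rw [alph_rec hS lift l0 ρF hρFsec hlift hρFker x]
        rw [Finsupp.sum, Finset.mul_sum]
        refine Finset.sum_congr rfl fun I _ => ?_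
        rw [mul_pow, ← mul_assoc, ← mul_assoc, P_mul]
      rw [hx, hy, ← Finset.sum_sub_distrib]
      have he : ∀ I ∈ (dec hS x).support,
          (P lift (M ∆ I) : F) * (alph hS lift l0 ((∏ i ∈ M ∩ I, (i : kF)) * (dec hS x I))) ^ 2
            - (P lift (M ∆ I) : F) * ((P lift (M ∩ I) : F) * alph hS lift l0 (dec hS x I)) ^ 2
          = (P lift (M ∆ I) : F)
              * (alph hS lift l0 ((∏ i ∈ M ∩ I, (i : kF)) * (dec hS x I))
                  - (P lift (M ∩ I) : F) * alph hS lift l0 (dec hS x I)) ^ 2 := by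
        intro I _
        rw [sq_sub, mul_sub]
      rw [Finset.sum_congr rfl he, ← dd_pow_sq n]
      exact v_sq_sum_le _ _ _ (fun I _ => v_le_one _) fun I _ => ih _ _

include hρFsec hlift hρFker in
lemma alph_mono (M : Finset S) (x : kF) :
    alph hS lift l0 ((∏ i ∈ M, (i : kF)) * x) = (P lift M : F) * alph hS lift l0 x := by
  have h := v_forall_zero (alph_mono_aux hS lift l0 ρF hρFsec hlift hρFker · M x)
  rwa [sub_eq_zero] at h


include hρFsec hlift hρFker in
lemma alph_mul_aux : ∀ n : ℕ, ∀ a b : kF,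
    Valued.v (alph hS lift l0 (a * b) - alph hS lift l0 a * alph hS lift l0 b) ≤ dd ^ 2 ^ n := by
  intro n
  induction n with
  | zero =>
      intro a b
      have h := v_sub_le_dd ρF hρFker
        (x := AA hS lift l0 ρF hρFsec hlift hρFker (a * b))
        (y := AA hS lift l0 ρF hρFsec hlift hρFker a * AA hS lift l0 ρF hρFsec hlift hρFker b)
        (by rw [map_mul, alph_section, alph_section, alph_section])
      simpa [AA] using h
  | succ n ih =>
      intro a b
      have hx : alph hS lift l0 (a * b)
          = ∑ I ∈ (dec hS a).support, ∑ J ∈ (dec hS b).support,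
              ((P lift I : F) * (P lift J : F))
                * (alph hS lift l0 ((dec hS a) I * (dec hS b) J)) ^ 2 := by
        conv_lhs => rw [dec_spec hS a]
        rw [Finsupp.sum, Finset.sum_mul, alph_sum hS lift l0 ρF hρFsec hlift hρFker]
        refine Finset.sum_congr rfl fun I _ => ?_
        have h1 : g S I ((dec hS a) I) * b
            = (∏ i ∈ I, (i : kF)) * ((dec hS a) I ^ 2 * b) := by rw [g]; ring
        rw [h1, alph_mono hS lift l0 ρF hρFsec hlift hρFker]
        have h2 : (dec hS a) I ^ 2 * b
            = ∑ J ∈ (dec hS b).support, g S J ((dec hS a) I * (dec hS b) J) := by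
          conv_lhs => rw [dec_spec hS b, Finsupp.sum, Finset.mul_sum]
          exact Finset.sum_congr rfl fun J _ => by rw [g, g]; ring
        rw [h2, alph_sum hS lift l0 ρF hρFsec hlift hρFker, Finset.mul_sum]
        refine Finset.sum_congr rfl fun J _ => ?_
        rw [alph_g hS lift l0 ρF hρFsec hlift hρFker]
        ring
      have hy : alph hS lift l0 a * alph hS lift l0 b
          = ∑ I ∈ (dec hS a).support, ∑ J ∈ (dec hS b).support,
              ((P lift I : F) * (P lift J : F))
                * (alph hS lift l0 ((dec hS a) I) * alph hS lift l0 ((dec hS b) J)) ^ 2 := by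
        conv_lhs => rw [alph_rec hS lift l0 ρF hρFsec hlift hρFker a,
          alph_rec hS lift l0 ρF hρFsec hlift hρFker b]
        rw [Finsupp.sum, Finsupp.sum, Finset.sum_mul_sum]
        exact Finset.sum_congr rfl fun I _ => Finset.sum_congr rfl fun J _ => by ring
      rw [hx, hy, ← Finset.sum_sub_distrib]
      have he : ∀ I ∈ (dec hS a).support,
          (∑ J ∈ (dec hS b).support,
              ((P lift I : F) * (P lift J : F))
                * (alph hS lift l0 ((dec hS a) I * (dec hS b) J)) ^ 2)
            - ∑ J ∈ (dec hS b).support,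
              ((P lift I : F) * (P lift J : F))
                * (alph hS lift l0 ((dec hS a) I) * alph hS lift l0 ((dec hS b) J)) ^ 2
          = ∑ J ∈ (dec hS b).support,
              ((P lift I : F) * (P lift J : F))
                * (alph hS lift l0 ((dec hS a) I * (dec hS b) J)
                    - alph hS lift l0 ((dec hS a) I) * alph hS lift l0 ((dec hS b) J)) ^ 2 := by
        intro I _
        rw [← Finset.sum_sub_distrib]
        exact Finset.sum_congr rfl fun J _ => by rw [sq_sub]; ring
      rw [Finset.sum_congr rfl he]
      refine Valuation.map_sum_le _ fun I _ => ?_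
      rw [← dd_pow_sq n]
      refine v_sq_sum_le _ _ _ (fun J _ => ?_) fun J _ => ih _ _
      rw [map_mul]
      exact mul_le_one' (v_le_one _) (v_le_one _)

include hρFsec hlift hρFker in
lemma alph_mul (a b : kF) :
    alph hS lift l0 (a * b) = alph hS lift l0 a * alph hS lift l0 b := by
  have h := v_forall_zero (alph_mul_aux hS lift l0 ρF hρFsec hlift hρFker · a b)
  rwa [sub_eq_zero] at h

include hρFsec hlift hρFker in
lemma alph_one : alph hS lift l0 (1 : kF) = 1 := by
  have h1 : g S ∅ (1 : kF) = 1 := by simp [g]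
  have h2 := alph_g hS lift l0 ρF hρFsec hlift hρFker ∅ 1
  rw [h1] at h2
  simp only [P, Finset.prod_empty, OneMemClass.coe_one, one_mul] at h2
  have hne : alph hS lift l0 (1 : kF) ≠ 0 := by
    intro h0
    have h3 := alph_section hS lift l0 ρF hρFsec hlift hρFker (1 : kF)
    have h4 : AA hS lift l0 ρF hρFsec hlift hρFker (1 : kF) = 0 := by
      refine Subtype.ext ?_
      show alph hS lift l0 (1 : kF) = ((0 : Oint F) : F)
      rw [ZeroMemClass.coe_zero]
      exact h0
    rw [h4, map_zero] at h3
    exact one_ne_zero h3.symm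
  have h5 : alph hS lift l0 (1:kF) * 1 = alph hS lift l0 (1:kF) * alph hS lift l0 (1:kF) := by
    rw [mul_one, ← sq]
    exact h2
  exact (mul_left_cancel₀ hne h5).symm

include hρFsec hlift hρFker in
lemma alph_s (s : S) : alph hS lift l0 (s : kF) = (lift s : F) := by
  have h1 : g S {s} (1 : kF) = (s : kF) := by simp [g]
  have h2 := alph_g hS lift l0 ρF hρFsec hlift hρFker {s} 1
  rw [h1, alph_one hS lift l0 ρF hρFsec hlift hρFker] at h2
  simpa [P] using h2


include hρFsec hlift hρFker in
lemma alph_unique_aux (β : kF →+* F) (hb1 : ∀ x, β x ∈ Oint F)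
    (hb2 : ∀ s : S, β (s : kF) = (lift s : F))
    (hb3 : ∀ (x : kF) (h : β x ∈ Oint F), ρF ⟨β x, h⟩ = x) :
    ∀ n : ℕ, ∀ a : kF, Valued.v (β a - alph hS lift l0 a) ≤ dd ^ 2 ^ n := by
  intro n
  induction n with
  | zero =>
      intro a
      have h := v_sub_le_dd ρF hρFker
        (x := ⟨β a, hb1 a⟩) (y := AA hS lift l0 ρF hρFsec hlift hρFker a)
        (by rw [hb3 a (hb1 a), alph_section])
      simpa [AA] using h
  | succ n ih =>
      intro a
      have hx : β a = ∑ I ∈ (dec hS a).support, (P lift I : F) * (β ((dec hS a) I)) ^ 2 := by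
        conv_lhs => rw [dec_spec hS a]
        rw [Finsupp.sum, map_sum]
        refine Finset.sum_congr rfl fun I _ => ?_
        rw [g, map_mul, map_pow, map_prod, P_coe]
        congr 1
        exact Finset.prod_congr rfl fun i _ => hb2 i
      have hy : alph hS lift l0 a
          = ∑ I ∈ (dec hS a).support, (P lift I : F) * (alph hS lift l0 ((dec hS a) I)) ^ 2 := by
        conv_lhs => rw [alph_rec hS lift l0 ρF hρFsec hlift hρFker a]
        rw [Finsupp.sum]
      rw [hx, hy, ← Finset.sum_sub_distrib]
      have he : ∀ I ∈ (dec hS a).support,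
          (P lift I : F) * (β ((dec hS a) I)) ^ 2
            - (P lift I : F) * (alph hS lift l0 ((dec hS a) I)) ^ 2
          = (P lift I : F) * (β ((dec hS a) I) - alph hS lift l0 ((dec hS a) I)) ^ 2 := by
        intro I _
        rw [sq_sub, mul_sub]
      rw [Finset.sum_congr rfl he, ← dd_pow_sq n]
      exact v_sq_sum_le _ _ _ (fun I _ => v_le_one _) fun I _ => ih _

include hρFsec hlift hρFker in
lemma alph_unique (β : kF →+* F) (hb1 : ∀ x, β x ∈ Oint F)
    (hb2 : ∀ s : S, β (s : kF) = (lift s : F))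
    (hb3 : ∀ (x : kF) (h : β x ∈ Oint F), ρF ⟨β x, h⟩ = x) (a : kF) :
    β a = alph hS lift l0 a := by
  have h := v_forall_zero
    (alph_unique_aux hS lift l0 ρF hρFsec hlift hρFker β hb1 hb2 hb3 · a)
  rwa [sub_eq_zero] at h

end Val
end Main
end
end Stmt4Aux


/-- Let `F` be a field of characteristic 2, complete with respect to a
discrete valuation, whose residue field `kF` (presented by the residue map `ρF` from
the valuation ring `A_F`) is imperfect.  Let `S` be a 2-basis of `kF` and `lift` a
choice of exactly one representative in `A_F` for each element of `S` (an injective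
lifting `s ↦ s'`).  Then there is a unique field monomorphism `α : kF →+* F` with
image in `A_F`, sending each `s ∈ S` to its chosen representative, and which is a
section of the residue map `ρF`. -/
theorem stmt4 (F : Type*) [Field F] [CharP F 2]
    [Valued F (WithZero (Multiplicative ℤ))] [CompleteSpace F]
    (hdisc : Function.Surjective (Valued.v : F → WithZero (Multiplicative ℤ)))
    (kF : Type*) [Field kF]
    (ρF : (Valued.v : Valuation F (WithZero (Multiplicative ℤ))).integer →+* kF)
    (hρFsurj : Function.Surjective ρF)
    (hρFker : ∀ x, ρF x = 0 ↔ Valued.v (x : F) < 1)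
    (himp : ¬ ∀ a : kF, ∃ b, b * b = a)
    (S : Set kF) (hS : IsTwoBasisSet S)
    (lift : S → (Valued.v : Valuation F (WithZero (Multiplicative ℤ))).integer)
    (hlift : ∀ s : S, ρF (lift s) = (s : kF))
    (hliftinj : Function.Injective lift) :
    ∃! α : kF →+* F,
      (∀ x, α x ∈ (Valued.v : Valuation F (WithZero (Multiplicative ℤ))).integer) ∧
      (∀ s : S, α (s : kF) = (lift s : F)) ∧
      ∀ (x : kF) (h : α x ∈ (Valued.v : Valuation F (WithZero (Multiplicative ℤ))).integer),
        ρF ⟨α x, h⟩ = x := by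
    classical
  have h2O : (2 : Stmt4Aux.Oint F) = 0 := by
    have h := CharP.cast_eq_zero (Stmt4Aux.Oint F) 2
    simpa using h
  haveI : CharP kF 2 := by
    refine (CharP.charP_iff_prime_eq_zero Nat.prime_two).mpr ?_
    have h : ((2:ℕ) : kF) = ρF ((2:ℕ) : Stmt4Aux.Oint F) := by rw [map_natCast]
    rw [h]
    have h2 : ((2:ℕ) : Stmt4Aux.Oint F) = 0 := by simpa using h2O
    rw [h2, map_zero]
  set l0 : kF → Stmt4Aux.Oint F := fun a => (hρFsurj a).choose with hl0def
  have hρFsec : ∀ a, ρF (l0 a) = a := fun a => (hρFsurj a).choose_spec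
  refine ⟨{ toFun := Stmt4Aux.alph hS lift l0,
            map_one' := Stmt4Aux.alph_one hS lift l0 ρF hρFsec hlift hρFker,
            map_mul' := Stmt4Aux.alph_mul hS lift l0 ρF hρFsec hlift hρFker,
            map_zero' := Stmt4Aux.alph_zero hS lift l0 ρF hρFsec hlift hρFker,
            map_add' := Stmt4Aux.alph_add hS lift l0 ρF hρFsec hlift hρFker }, ⟨?_, ?_, ?_⟩, ?_⟩
  · exact fun x => Stmt4Aux.alph_mem hS lift l0 ρF hρFsec hlift hρFker x
  · exact fun s => Stmt4Aux.alph_s hS lift l0 ρF hρFsec hlift hρFker s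
  · exact fun x h => Stmt4Aux.alph_section hS lift l0 ρF hρFsec hlift hρFker x
  · intro β hβ
    ext a
    exact Stmt4Aux.alph_unique hS lift l0 ρF hρFsec hlift hρFker β hβ.1 hβ.2.1 hβ.2.2 a
end

section
/- Let k be a field of characteristic 2 and F = k((π)) the field of formal Laurent series over k. Let a = Σ_{i ≥ m} c_i π^i ∈ F be a nonzero element of order m = v(a) < 0 (so c_m ≠ 0), and suppose that the leading coefficient c_m is not a square in k. Then a ∉ ℘(F); that is, there is no x ∈ F with x² + x = a. -/
/-- Let `k` be a field of characteristic 2 and `F = k((π))` the field of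
formal Laurent series over `k`.  If `a ∈ F` is nonzero of order `m = v(a) < 0` and its
leading coefficient (the coefficient of `π^m`) is not a square in `k`, then
`a ∉ ℘(F)`: there is no `x ∈ F` with `x² + x = a`. -/
theorem stmt8 (k : Type*) [Field k] [CharP k 2]
    (a : LaurentSeries k) (ha0 : a ≠ 0) (hord : a.order < 0)
    (hlead : ¬ ∃ b : k, b ^ 2 = a.coeff a.order) :
    ¬ ∃ x : LaurentSeries k, x ^ 2 + x = a := by
  rintro ⟨x, rfl⟩
  have hx0 : x ≠ 0 := by rintro rfl; simp at ha0
  set n := x.order with hn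
  have hx2 : x ^ 2 = x * x := sq x
  have hx2ne : x ^ 2 ≠ 0 := pow_ne_zero 2 hx0
  have hordx2 : (x ^ 2).order = n + n := by
    rw [hx2, HahnSeries.order_mul hx0 hx0]
  -- the order of x must be negative
  have hnneg : n < 0 := by
    by_contra h
    push_neg at h
    have h1 : min (x ^ 2).order x.order ≤ (x ^ 2 + x).order :=
      HahnSeries.min_order_le_order_add ha0
    rw [hordx2] at h1
    have : (0 : ℤ) ≤ (x ^ 2 + x).order := le_trans (le_min (by omega) h) h1
    omega
  have hlt : n + n < n := by omega
  -- coefficient of x^2+x at n+n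
  have hcoeff : (x ^ 2 + x).coeff (n + n) = x.coeff n * x.coeff n := by
    rw [HahnSeries.coeff_add, hx2, HahnSeries.coeff_eq_zero_of_lt_order hlt, add_zero]
    have := HahnSeries.coeff_mul_order_add_order x x
    rwa [HahnSeries.leadingCoeff_eq] at this
  have hcne : (x ^ 2 + x).coeff (n + n) ≠ 0 := by
    rw [hcoeff]
    exact mul_ne_zero (by rw [hn, ← HahnSeries.leadingCoeff_eq]; exact HahnSeries.leadingCoeff_ne_zero.mpr hx0) (by rw [hn, ← HahnSeries.leadingCoeff_eq]; exact HahnSeries.leadingCoeff_ne_zero.mpr hx0)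
  have hle : (x ^ 2 + x).order ≤ n + n := HahnSeries.order_le_of_coeff_ne_zero hcne
  have hge : n + n ≤ (x ^ 2 + x).order := by
    have h1 := HahnSeries.min_order_le_order_add (x := x ^ 2) (y := x) ha0
    rw [hordx2] at h1
    exact le_trans (le_min le_rfl hlt.le) h1
  have horder : (x ^ 2 + x).order = n + n := le_antisymm hle hge
  exact hlead ⟨x.coeff n, by rw [horder, hcoeff, sq]⟩
end

section
/- Let 𝔽 be a field of characteristic 2 with 2-basis {t_i}_{i∈ℐ}, and let p = Σ_{j=0}^d p_j x^{d-j} ∈ 𝔽[x] (with p₀ = 1) be a monic, irreducible and separable polynomial of degree d such that p ≠ x. With the notation below, the 2^n × 2^n matrix M over 𝔽(p) = 𝔽[x]/(p) whose (K₁, K₂) entry is P_{K₁+K₂} (K₁, K₂ ∈ T₁ = (ℤ/2ℤ)^n) is invertible. -/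
/-- Given a 2-basis `t`, a polynomial `p = Σ_{j=0}^d p_j x^{d-j}` with 2-adic
coefficient data `c` (so that `p_{j,I} = c j I`), and the enumeration `e : Fin n → ι`
of the finitely many 2-basis indices occurring in the coefficients of `p`, the element
`P_K ∈ 𝔽(p) = 𝔽[x]/(p)`, for `K ∈ T₁ = {0,1}^n`, is the class of
`t^K · Σ_{0 ≤ j ≤ d-1, d-j odd} p_{j,K}² x^{d-j}` (which is
`t^K(p_{1,K}²x^{d-1} + p_{3,K}²x^{d-3} + ⋯ + p_{d-1,K}²x)` for `d` even and
`t^K(p_{0,K}²x^d + p_{2,K}²x^{d-2} + ⋯ + p_{d-1,K}²x)` for `d` odd). -/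
noncomputable def Pclass {𝔽 ι : Type*} [Field 𝔽] [DecidableEq ι] (t : ι → 𝔽)
    (p : Polynomial 𝔽) (d : ℕ) (c : ℕ → (Finset ι →₀ 𝔽)) {n : ℕ} (e : Fin n → ι)
    (K : Fin n → Bool) : AdjoinRoot p :=
  AdjoinRoot.mk p (∑ j ∈ Finset.range d,
    if Odd (d - j) then
      Polynomial.C ((∏ i, if K i then t (e i) else 1) *
          (c j ((Finset.univ.filter fun i : Fin n => K i = true).image e)) ^ 2) *
        Polynomial.X ^ (d - j)
    else 0)

section Aux

variable {R : Type*} [CommRing R]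

/-- Freshman's dream for the square of a sum when `2 = 0`. -/
lemma sum_mul_self_of_two_eq_zero (h2 : (2 : R) = 0) {α : Type*} (s : Finset α) (f : α → R) :
    (∑ x ∈ s, f x) * (∑ x ∈ s, f x) = ∑ x ∈ s, f x * f x := by
  classical
  induction s using Finset.induction with
  | empty => simp
  | insert a s' h ih =>
    rw [Finset.sum_insert h, Finset.sum_insert h, ← ih]
    have key : (f a + ∑ x ∈ s', f x) * (f a + ∑ x ∈ s', f x)
        = f a * f a + 2 * (f a * ∑ x ∈ s', f x)
          + (∑ x ∈ s', f x) * (∑ x ∈ s', f x) := by ring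
    rw [key, h2]; ring

/-- The key convolution identity: in characteristic two, the "group matrix" of
`(ℤ/2)^n` squares to a scalar matrix. -/
lemma xor_conv_key (h2 : (2 : R) = 0) {n : ℕ} (f : (Fin n → Bool) → R)
    (K₁ K₂ : Fin n → Bool) :
    (∑ J : Fin n → Bool, f (fun i => xor (K₁ i) (J i)) * f (fun i => xor (J i) (K₂ i)))
      = if K₁ = K₂ then (∑ K, f K) * (∑ K, f K) else 0 := by
  classical
  have hxx : ∀ a b : Bool, xor a (xor a b) = b := by decide
  have habc : ∀ a b c : Bool, xor (xor a c) b = xor (xor a b) c := by decide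
  have hself : ∀ a b : Bool, xor (xor a a) b = b := by decide
  have hσ : Function.Bijective (fun (L : Fin n → Bool) => fun i => xor (K₁ i) (L i)) :=
    Function.Involutive.bijective (fun L => funext fun i => hxx _ _)
  have hre : (∑ L : Fin n → Bool,
        f L * f (fun i => xor (xor (K₁ i) (K₂ i)) (L i)))
      = ∑ J : Fin n → Bool, f (fun i => xor (K₁ i) (J i)) * f (fun i => xor (J i) (K₂ i)) := by
    refine Fintype.sum_bijective _ hσ _ _ ?_
    intro L
    congr 1
    · exact congrArg f (funext fun i => (hxx _ _).symm)
    · exact congrArg f (funext fun i => habc _ _ _)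
  rw [← hre]
  by_cases hK : K₁ = K₂
  · subst hK
    rw [if_pos rfl, sum_mul_self_of_two_eq_zero h2]
    refine Finset.sum_congr rfl fun L _ => ?_
    exact congrArg (f L * f ·) (funext fun i => hself _ _)
  · rw [if_neg hK]
    set D : Fin n → Bool := fun i => xor (K₁ i) (K₂ i) with hD
    obtain ⟨i₀, hi₀⟩ : ∃ i, D i ≠ false := by
      by_contra hcon
      push_neg at hcon
      apply hK
      funext i
      have := hcon i
      simp only [hD] at this
      cases hb1 : K₁ i <;> cases hb2 : K₂ i <;> simp_all
    apply Finset.sum_ninvolution (fun L => fun i => xor (D i) (L i))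
    · intro L
      have h1 : (fun i => xor (D i) (xor (D i) (L i))) = L := funext fun i => hxx _ _
      rw [h1]
      have h3 : f L * f (fun i => xor (D i) (L i)) + f (fun i => xor (D i) (L i)) * f L
          = 2 * (f L * f (fun i => xor (D i) (L i))) := by ring
      rw [h3, h2, zero_mul]
    · intro L _ h
      have := congrFun h i₀
      cases hb : D i₀
      · exact hi₀ hb
      · rw [hb] at this; cases hl : L i₀ <;> rw [hl] at this <;> exact Bool.noConfusion this
    · intro L; exact Finset.mem_univ _
    · intro L; exact funext fun i => hxx _ _

end Aux

/-- Let `𝔽` be a field of characteristic 2 with 2-basis `{t_i}`, and let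
`p = Σ_{j=0}^d p_j x^{d-j}` be a monic, irreducible, separable polynomial of degree `d`
with `p ≠ x`.  Writing each coefficient as `p_j = Σ_I t^I p_{j,I}²` (the data `c`) and
letting `ℐ₁ = {j₁,…,j_n}` (enumerated by `e`) be the set of 2-basis indices occurring,
the `2^n × 2^n` matrix `M` over `𝔽(p) = 𝔽[x]/(p)`, indexed by `T₁ = (ℤ/2)^n` with
`(K₁,K₂)` entry `P_{K₁+K₂}`, is invertible. -/
theorem stmt9 {𝔽 ι : Type*} [Field 𝔽] [CharP 𝔽 2] [DecidableEq ι]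
    (t : ι → 𝔽) (ht : IsTwoBasisFam t)
    (p : Polynomial 𝔽) (hmonic : p.Monic) (hirr : Irreducible p)
    (hsep : p.Separable) (hpX : p ≠ Polynomial.X)
    (d : ℕ) (hd : p.natDegree = d)
    (c : ℕ → (Finset ι →₀ 𝔽))
    (hc : ∀ j ≤ d, p.coeff (d - j) = (c j).sum fun I a => (∏ i ∈ I, t i) * a ^ 2)
    (n : ℕ) (e : Fin n → ι) (he : Function.Injective e)
    (hrange : Set.range e = {i : ι | ∃ j ≤ d, ∃ I ∈ (c j).support, i ∈ I}) :
    IsUnit (Matrix.of fun K₁ K₂ : Fin n → Bool =>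
      Pclass t p d c e fun i => xor (K₁ i) (K₂ i)) := by
  classical
  haveI : Fact (Irreducible p) := ⟨hirr⟩
  set R := AdjoinRoot p with hR
  have h2F : (2 : 𝔽) = 0 := CharTwo.two_eq_zero
  have h2R : (2 : R) = 0 := by
    have h : (2 : R) = algebraMap 𝔽 R 2 := (map_ofNat _ 2).symm
    rw [h, h2F, map_zero]
  -- Step 1: the coefficient identity — summing the 2-adic pieces over all K recovers p_j.
  have hcoeff : ∀ j ∈ Finset.range d,
      (∑ K : Fin n → Bool, (∏ i, if K i then t (e i) else 1) *
        (c j ((Finset.univ.filter fun i : Fin n => K i = true).image e)) ^ 2)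
      = p.coeff (d - j) := by
    intro j hj
    rw [Finset.mem_range] at hj
    rw [hc j hj.le, Finsupp.sum]
    have hsub : (c j).support ⊆ (Finset.univ.image e).powerset := by
      intro I hI
      rw [Finset.mem_powerset]
      intro i hi
      have hmem : i ∈ Set.range e := by
        rw [hrange]; exact ⟨j, hj.le, I, hI, hi⟩
      obtain ⟨k, rfl⟩ := hmem
      exact Finset.mem_image_of_mem e (Finset.mem_univ k)
    rw [Finset.sum_subset hsub (fun I _ hI => by
      rw [Finsupp.notMem_support_iff] at hI
      rw [hI]; ring)]
    symm
    have hSrec : ∀ S ∈ (Finset.univ.image e).powerset,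
        Finset.image e (Finset.univ.filter fun k : Fin n => decide (e k ∈ S) = true) = S := by
      intro S hS
      rw [Finset.mem_powerset] at hS
      ext x
      rw [Finset.mem_image]
      constructor
      · rintro ⟨k, hk, rfl⟩
        rw [Finset.mem_filter] at hk
        simpa using hk.2
      · intro hx
        obtain ⟨k, hke⟩ : ∃ k, e k = x := by
          have hx' := hS hx
          rw [Finset.mem_image] at hx'
          obtain ⟨k, _, hk⟩ := hx'
          exact ⟨k, hk⟩
        exact ⟨k, Finset.mem_filter.mpr ⟨Finset.mem_univ _, by simp [hke, hx]⟩, hke⟩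
    refine Finset.sum_nbij'
      (fun S => fun i => decide (e i ∈ S))
      (fun K => (Finset.univ.filter fun i : Fin n => K i = true).image e)
      (fun S _ => Finset.mem_univ _) ?_ ?_ ?_ ?_
    · intro K _
      rw [Finset.mem_powerset]
      exact Finset.image_subset_image (Finset.filter_subset _ _)
    · intro S hS
      exact hSrec S hS
    · intro K _
      funext i
      by_cases h : K i = true
      · have hmem : e i ∈ (Finset.univ.filter fun i : Fin n => K i = true).image e :=
          Finset.mem_image_of_mem e (Finset.mem_filter.mpr ⟨Finset.mem_univ _, h⟩)
        simp [hmem, h]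
      · have hKi : K i = false := by
          cases hb : K i
          · rfl
          · exact absurd hb h
        have hmem : e i ∉ (Finset.univ.filter fun i : Fin n => K i = true).image e := by
          rw [Finset.mem_image]
          rintro ⟨k, hk, hek⟩
          rw [Finset.mem_filter] at hk
          have hcontr : K i = true := he hek ▸ hk.2
          rw [hKi] at hcontr
          exact Bool.noConfusion hcontr
        simp [hmem, hKi]
    · intro S hS
      have h1 := hSrec S hS
      conv_lhs => rw [← h1]
      rw [Finset.prod_image (fun a _ b _ h => he h), Finset.prod_filter]
  -- Step 2: the sum of the P_K's is the class of X * p'.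
  set s : R := ∑ K : Fin n → Bool, Pclass t p d c e K with hs_def
  have hs_eq : s = AdjoinRoot.mk p (Polynomial.X * Polynomial.derivative p) := by
    rw [hs_def]
    unfold Pclass
    rw [← map_sum]
    congr 1
    rw [Finset.sum_comm]
    have step : ∀ j ∈ Finset.range d,
        (∑ K : Fin n → Bool,
          if Odd (d - j) then
            Polynomial.C ((∏ i, if K i then t (e i) else 1) *
              (c j ((Finset.univ.filter fun i : Fin n => K i = true).image e)) ^ 2) *
            Polynomial.X ^ (d - j)
          else 0)
        = if Odd (d - j) then
            Polynomial.C (p.coeff (d - j)) * Polynomial.X ^ (d - j) else 0 := by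
      intro j hj
      by_cases hodd : Odd (d - j)
      · simp only [if_pos hodd]
        rw [← Finset.sum_mul, ← map_sum, hcoeff j hj]
      · simp only [if_neg hodd, Finset.sum_const_zero]
    rw [Finset.sum_congr rfl step]
    -- now prove the polynomial identity coefficientwise
    ext m
    rw [Polynomial.finset_sum_coeff]
    have hterm : ∀ j ∈ Finset.range d,
        ((if Odd (d - j) then
            Polynomial.C (p.coeff (d - j)) * Polynomial.X ^ (d - j) else 0).coeff m)
        = if Odd (d - j) ∧ m = d - j then p.coeff (d - j) else 0 := by
      intro j _
      by_cases hodd : Odd (d - j)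
      · rw [if_pos hodd, Polynomial.coeff_C_mul_X_pow]
        by_cases hm : m = d - j
        · rw [if_pos hm, if_pos ⟨hodd, hm⟩]
        · rw [if_neg hm, if_neg (fun h => hm h.2)]
      · rw [if_neg hodd, if_neg (fun h => hodd h.1), Polynomial.coeff_zero]
    rw [Finset.sum_congr rfl hterm]
    have hcast_odd : ∀ m : ℕ, Odd m → ((m : ℕ) : 𝔽) = 1 := by
      rintro m ⟨l, rfl⟩
      push_cast
      rw [h2F]
      ring
    have hcast_even : ∀ m : ℕ, ¬ Odd m → ((m : ℕ) : 𝔽) = 0 := by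
      intro m hm
      rw [Nat.not_odd_iff_even] at hm
      obtain ⟨l, rfl⟩ := hm
      push_cast
      rw [← two_mul (l : 𝔽), h2F, zero_mul]
    cases m with
    | zero =>
      rw [Polynomial.coeff_X_mul_zero]
      refine Finset.sum_eq_zero fun j hj => ?_
      rw [Finset.mem_range] at hj
      rw [if_neg]
      rintro ⟨-, h0⟩
      omega
    | succ k =>
      rw [Polynomial.coeff_X_mul, Polynomial.coeff_derivative]
      by_cases hmd : Odd (k + 1) ∧ k + 1 ≤ d
      · have hmem : d - (k + 1) ∈ Finset.range d := by
          rw [Finset.mem_range]; omega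
        rw [Finset.sum_eq_single_of_mem (d - (k + 1)) hmem (fun j hj hne => by
          rw [Finset.mem_range] at hj
          rw [if_neg]
          rintro ⟨-, h0⟩
          omega)]
        have hdd : d - (d - (k + 1)) = k + 1 := by omega
        rw [hdd, if_pos ⟨hmd.1, rfl⟩]
        have hco := hcast_odd _ hmd.1
        push_cast at hco
        rw [hco, mul_one]
      · rw [Finset.sum_eq_zero (fun j hj => by
          rw [Finset.mem_range] at hj
          rw [if_neg]
          rintro ⟨ho, h0⟩
          exact hmd ⟨h0 ▸ ho, by omega⟩)]
        by_cases hodd : Odd (k + 1)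
        · have hgt : d < k + 1 := by
            by_contra hle
            exact hmd ⟨hodd, by omega⟩
          rw [Polynomial.coeff_eq_zero_of_natDegree_lt (by rw [hd]; exact hgt), zero_mul]
        · have hce := hcast_even _ hodd
          push_cast at hce
          rw [hce, mul_zero]
  -- Step 3: s ≠ 0.
  have hs_ne : s ≠ 0 := by
    rw [hs_eq]
    intro h
    rw [AdjoinRoot.mk_eq_zero] at h
    rcases hirr.prime.2.2 _ _ h with hX | hD
    · exact hpX (Polynomial.eq_of_monic_of_associated hmonic Polynomial.monic_X
        (hirr.associated_of_dvd Polynomial.irreducible_X hX))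
    · exact hirr.not_isUnit (IsCoprime.isUnit_of_dvd' hsep dvd_rfl hD)
  -- Step 4: the matrix squares to (s*s) • 1.
  set M : Matrix (Fin n → Bool) (Fin n → Bool) R :=
    Matrix.of (fun K₁ K₂ : Fin n → Bool =>
      Pclass t p d c e fun i => xor (K₁ i) (K₂ i)) with hM
  have hM2 : M * M = (s * s) • (1 : Matrix (Fin n → Bool) (Fin n → Bool) R) := by
    ext K₁ K₂
    rw [Matrix.mul_apply]
    simp only [hM, Matrix.of_apply, Matrix.smul_apply, Matrix.one_apply, smul_eq_mul,
      mul_ite, mul_one, mul_zero]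
    rw [xor_conv_key h2R (fun K => Pclass t p d c e K) K₁ K₂]
  -- Step 5: conclude.
  have hss : s * s ≠ 0 := mul_ne_zero hs_ne hs_ne
  refine isUnit_iff_exists.mpr ⟨(s * s)⁻¹ • M, ?_, ?_⟩
  · rw [Matrix.mul_smul, hM2, smul_smul, inv_mul_cancel₀ hss, one_smul]
  · rw [Matrix.smul_mul, hM2, smul_smul, inv_mul_cancel₀ hss, one_smul]
end

section
/- Let 𝔽 be a field of characteristic 2 with 2-basis {t_i}_{i∈ℐ}, and let p = Σ_{j=0}^d p_j x^{d-j} ∈ 𝔽[x] (with p₀ = 1) be a monic, irreducible and inseparable polynomial of degree d. Then d is even and p_j = 0 for every odd j; moreover, with ℐ₁ = {j₁, …, j_n} the (nonempty) finite set of 2-basis indices occurring in the coefficients of p, there exists l ∈ {1, …, n} such that t_{j_l} belongs to the subfield 𝔽(p)²(t_{j₁}, …, t_{j_{l−1}}, t_{j_{l+1}}, …, t_{j_n}) of 𝔽(p) = 𝔽[x]/(p) generated by the squares of 𝔽(p) together with the elements t_{j_m} for m ≠ l. -/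
open Polynomial

/-- 2-independence in the sense of Mac Lane's `p`-independence, for `p = 2`. -/
def TwoIndependentOn {K ι : Type*} [Field K] (u : ι → K) (S : Set ι) : Prop :=
  ∀ i ∈ S, u i ∉ Subfield.closure ({x : K | ∃ y, y ^ 2 = x} ∪ u '' (S \ {i}))

section TwoIndependence

variable {K ι : Type*} [Field K] {u : ι → K}

theorem sum_powerset_prod_mul_sq_mem_closure {T : Set ι} {s : Finset ι} (hs : ↑s ⊆ T)
    (b : Finset ι → K) :
    ∑ J ∈ s.powerset, (∏ i ∈ J, u i) * b J ^ 2 ∈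
      Subfield.closure ({x : K | ∃ y, y ^ 2 = x} ∪ u '' T) :=
  Subfield.sum_mem _ fun J hJ => Subfield.mul_mem _
    (Subfield.prod_mem _ fun i hi =>
      Subfield.subset_closure (Or.inr ⟨i, hs (Finset.mem_powerset.mp hJ hi), rfl⟩))
    (Subfield.subset_closure (Or.inl ⟨b J, rfl⟩))

theorem twoIndependentOn_range {κ : Type*} {e : κ → ι} (he : e.Injective)
    (h : ∀ l, u (e l) ∉ Subfield.closure
      ({x : K | ∃ y, y ^ 2 = x} ∪ (fun m => u (e m)) '' {m | m ≠ l})) :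
    TwoIndependentOn u (Set.range e) := by
  rintro _ ⟨l, rfl⟩
  rw [← Set.image_singleton, ← Set.image_compl_eq_range_sdiff_image he, Set.image_image]
  exact h l

theorem TwoIndependentOn.eq_zero_of_sum_eq_zero [DecidableEq ι] {S : Set ι}
    (hu : TwoIndependentOn u S)
    {s : Finset ι} (hs : ↑s ⊆ S) {b : Finset ι → K}
    (h : ∑ J ∈ s.powerset, (∏ i ∈ J, u i) * b J ^ 2 = 0) {J : Finset ι} (hJ : J ⊆ s) :
    b J = 0 := by
  induction s using Finset.induction generalizing b J with
  | empty => simpa [Finset.subset_empty.mp hJ] using h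
  | @insert a s ha ih =>
    rw [Finset.coe_insert, Set.insert_subset_iff] at hs
    rw [Finset.sum_powerset_insert ha] at h
    set A := ∑ J ∈ s.powerset, (∏ i ∈ J, u i) * b J ^ 2
    set B := ∑ J ∈ s.powerset, (∏ i ∈ J, u i) * b (insert a J) ^ 2
    have hsplit :
        ∑ J ∈ s.powerset, (∏ i ∈ insert a J, u i) * b (insert a J) ^ 2 = u a * B := by
      rw [Finset.mul_sum]
      refine Finset.sum_congr rfl fun J hJ => ?_
      rw [Finset.prod_insert fun haJ => ha (Finset.mem_powerset.mp hJ haJ), mul_assoc]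
    rw [hsplit] at h
    have hB : B = 0 := by
      by_contra hB
      have hsa : ↑s ⊆ S \ {a} := fun i hi => ⟨hs.2 hi, fun hia => ha (hia ▸ hi)⟩
      apply hu a hs.1
      rw [show u a = -A * B⁻¹ by rw [eq_mul_inv_iff_mul_eq₀ hB]; linear_combination h]
      exact mul_mem (neg_mem (sum_powerset_prod_mul_sq_mem_closure hsa b))
        (inv_mem (sum_powerset_prod_mul_sq_mem_closure hsa _))
    rw [hB, mul_zero, add_zero] at h
    by_cases haJ : a ∈ J
    · rw [← Finset.insert_erase haJ]
      exact ih hs.2 (b := fun J => b (insert a J)) hB (Finset.subset_insert_iff.mp hJ)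
    · exact ih hs.2 h ((Finset.subset_insert_iff_of_notMem haJ).mp hJ)

end TwoIndependence

theorem Polynomial.expand_two_eq_sum_C_mul_sq {R κ : Type*} [CommRing R] [CharP R 2]
    {q : R[X]} {𝒮 : Finset κ} {x : κ → R} {a : ℕ → κ → R}
    (hq : ∀ k ≤ q.natDegree, q.coeff k = ∑ I ∈ 𝒮, x I * a k I ^ 2) :
    expand R 2 q = ∑ I ∈ 𝒮,
      C (x I) * (∑ k ∈ Finset.range (q.natDegree + 1), C (a k I) * X ^ k) ^ 2 := by
  calc expand R 2 q = ∑ k ∈ Finset.range (q.natDegree + 1), C (q.coeff k) * (X ^ 2) ^ k := by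
        conv_lhs => rw [q.as_sum_range_C_mul_X_pow]
        simp only [map_sum, map_mul, expand_C, map_pow, expand_X]
    _ = ∑ k ∈ Finset.range (q.natDegree + 1), ∑ I ∈ 𝒮,
          C (x I) * (C (a k I) * X ^ k) ^ 2 := by
        refine Finset.sum_congr rfl fun k hk => ?_
        rw [hq k (Nat.lt_succ_iff.mp (Finset.mem_range.mp hk)), map_sum, Finset.sum_mul]
        refine Finset.sum_congr rfl fun I _ => ?_
        simp only [map_mul, map_pow]
        ring
    _ = _ := by
        rw [Finset.sum_comm]
        simp only [CharTwo.sum_sq, Finset.mul_sum]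

theorem TwoIndependentOn.aeval_eq_zero {F K ι : Type*} [Field F] [Field K] [Algebra F K]
    [DecidableEq ι] {t : ι → F} {S : Set ι}
    (ht : TwoIndependentOn (fun i => algebraMap F K (t i)) S)
    {s : Finset ι} (hs : ↑s ⊆ S) {Q : Finset ι → F[X]} {θ : K}
    (h : aeval θ (∑ I ∈ s.powerset, C (∏ i ∈ I, t i) * Q I ^ 2) = 0) {J : Finset ι}
    (hJ : J ⊆ s) : aeval θ (Q J) = 0 := by
  refine ht.eq_zero_of_sum_eq_zero hs (b := fun I => aeval θ (Q I)) ?_ hJ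
  simpa only [map_sum, map_mul, map_pow, aeval_C, map_prod] using h

theorem AdjoinRoot.aeval_root_ne_zero {R : Type*} [CommRing R] [IsDomain R] {p Q : R[X]}
    (hQ : Q ≠ 0) (hlt : Q.natDegree < p.natDegree) : aeval (root p) Q ≠ 0 := by
  rw [aeval_eq, Ne, mk_eq_zero]
  exact fun hdvd => (natDegree_le_of_dvd hdvd hQ).not_gt hlt

theorem IsTwoBasisFam.apply_empty_eq_one {k ι : Type*} [Field k] {t : ι → k}
    (ht : IsTwoBasisFam t) {c : Finset ι →₀ k}
    (hc : (c.sum fun I a => (∏ i ∈ I, t i) * a ^ 2) = 1) : c ∅ = 1 := by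
  have hsingle : (Finsupp.single ∅ 1).sum (fun I a => (∏ i ∈ I, t i) * a ^ 2) = 1 := by
    simp
  rw [(ht 1).unique hc.symm hsingle.symm, Finsupp.single_eq_same]

/-- Let `𝔽` be a field of characteristic 2 with 2-basis `{t_i}`, and let
`p = Σ_{j=0}^d p_j x^{d-j}` be a monic, irreducible, inseparable (zero derivative)
polynomial of degree `d`.  Then `d` is even and `p_j = 0` for all odd `j`; moreover,
with `ℐ₁ = {j₁,…,j_n}` (enumerated by `e`) the set of 2-basis indices occurring in the
2-adic expansions `p_j = Σ_I t^I p_{j,I}²` of the coefficients of `p`, there exists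
`l` such that `t_{j_l}` belongs to the subfield of `𝔽(p) = 𝔽[x]/(p)` generated by the
squares `𝔽(p)²` together with the elements `t_{j_m}`, `m ≠ l`. -/
theorem stmt10 {𝔽 ι : Type*} [Field 𝔽] [CharP 𝔽 2] [DecidableEq ι]
    (t : ι → 𝔽) (ht : IsTwoBasisFam t)
    (p : Polynomial 𝔽) (hmonic : p.Monic) (hirr : Fact (Irreducible p))
    (hinsep : Polynomial.derivative p = 0)
    (d : ℕ) (hd : p.natDegree = d)
    (c : ℕ → (Finset ι →₀ 𝔽))
    (hc : ∀ j ≤ d, p.coeff (d - j) = (c j).sum fun I a => (∏ i ∈ I, t i) * a ^ 2)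
    (n : ℕ) (e : Fin n → ι) (he : Function.Injective e)
    (hrange : Set.range e = {i : ι | ∃ j ≤ d, ∃ I ∈ (c j).support, i ∈ I}) :
    Even d ∧ (∀ j ≤ d, Odd j → p.coeff (d - j) = 0) ∧
    ∃ l : Fin n, algebraMap 𝔽 (AdjoinRoot p) (t (e l)) ∈
      Subfield.closure ({x : AdjoinRoot p | ∃ y, y ^ 2 = x} ∪
        (fun m : Fin n => algebraMap 𝔽 (AdjoinRoot p) (t (e m))) '' {m | m ≠ l}) := by
  obtain ⟨q, hpq⟩ : ∃ q, expand 𝔽 2 q = p := ⟨_, expand_contract 2 hinsep two_ne_zero⟩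
  have hdq : d = q.natDegree * 2 := by rw [← hd, ← hpq, natDegree_expand]
  refine ⟨⟨q.natDegree, by omega⟩, fun j hj hodd => ?_, ?_⟩
  · rw [← hpq, coeff_expand two_pos, if_neg]
    rintro ⟨r, hr⟩
    obtain ⟨i, rfl⟩ := hodd
    omega
  by_contra! hcon
  set s := Finset.univ.image e
  have hsupp : ∀ j ≤ d, (c j).support ⊆ s.powerset := fun j hj I hI =>
    Finset.mem_powerset.mpr fun i hi => by
      obtain ⟨l, rfl⟩ : i ∈ Set.range e := hrange ▸ ⟨j, hj, I, hI, hi⟩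
      exact Finset.mem_image_of_mem e (Finset.mem_univ l)
  set Q : Finset ι → 𝔽[X] := fun I =>
    ∑ k ∈ Finset.range (q.natDegree + 1), C (c (d - 2 * k) I) * X ^ k
  have hdecomp : p = ∑ I ∈ s.powerset, C (∏ i ∈ I, t i) * Q I ^ 2 := by
    rw [← hpq]
    refine expand_two_eq_sum_C_mul_sq fun k hk => ?_
    rw [← coeff_expand_mul two_pos, hpq, show k * 2 = d - (d - 2 * k) by omega,
      hc _ (Nat.sub_le _ _),
      Finsupp.sum_of_support_subset _ (hsupp _ (Nat.sub_le _ _)) _ (by simp)]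
  have hind : TwoIndependentOn (fun i => algebraMap 𝔽 (AdjoinRoot p) (t i)) (Set.range e) :=
    twoIndependentOn_range he hcon
  have hQ : aeval (AdjoinRoot.root p) (Q ∅) = 0 :=
    hind.aeval_eq_zero (by simp [s]) (by
      rw [← hdecomp, AdjoinRoot.aeval_eq, AdjoinRoot.mk_self]) (Finset.empty_subset s)
  have hlead : (Q ∅).coeff q.natDegree = 1 := by
    simp only [Q, finsetSum_coeff, coeff_C_mul_X_pow, Finset.sum_ite_eq, Finset.mem_range,
      lt_add_one, if_true, show d - 2 * q.natDegree = 0 by omega]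
    refine ht.apply_empty_eq_one ?_
    rw [← hc 0 (Nat.zero_le d), Nat.sub_zero, ← hd, hmonic.coeff_natDegree]
  have hQdeg : (Q ∅).natDegree ≤ q.natDegree :=
    natDegree_sum_le_of_forall_le _ _ fun k hk =>
      (natDegree_C_mul_X_pow_le _ _).trans (Nat.lt_succ_iff.mp (Finset.mem_range.mp hk))
  have hpos := hirr.out.natDegree_pos
  exact AdjoinRoot.aeval_root_ne_zero (fun h0 => by simp [h0] at hlead) (by omega) hQ
end
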